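/- arXiv:2206.11589 — 2 statements merged into one kernel-verified Lean document; each statement's English description precedes it below -/
import Mathlib

section
/- Let w₁,...,w_k be unit vectors in ℝ^d with 2 ≤ k ≤ d+1 forming a regular simplex (⟪w_i,w_j⟫ = −1/(k−1) for i ≠ j). Then for each i, setting z = w_i gives sample margin ⟪w_i,z⟫ − max_{j≠i}⟪w_j,z⟫ = k/(k−1), and this is the maximal possible value of min_i max_z (⟪w_i,z⟫ − max_{j≠i}⟪w_j,z⟫) over all configurations of unit vectors w₁,...,w_k. -/
/-!
Sum the prototypes, `s = ∑ j, w j`, and pick `i` maximising `⟪w i, s⟫`. Since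
`‖s‖² = ∑ j, ⟪w j, s⟫ ≤ k ⟪w i, s⟫`, the vector `k • w i - s` has norm at most `k`. Bounding the
maximum over `j ≠ i` below by the average, `(k - 1)` times the margin of `i` at a unit `z` is at most
`⟪k • w i - s, z⟫ ≤ k`. The regular simplex attains `k / (k - 1)` at `z = w i`.
-/

open scoped RealInnerProductSpace

open Finset

theorem exists_norm_sq_sum_le_card_mul_inner {ι E : Type*} [Fintype ι] [Nonempty ι]
    [NormedAddCommGroup E] [InnerProductSpace ℝ E] (w : ι → E) :
    ∃ i, ‖∑ j, w j‖ ^ 2 ≤ Fintype.card ι * ⟪w i, ∑ j, w j⟫ := by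
  obtain ⟨i, -, hi⟩ := exists_max_image univ (fun j => ⟪w j, ∑ l, w l⟫) univ_nonempty
  refine ⟨i, ?_⟩
  calc ‖∑ j, w j‖ ^ 2 = ∑ j, ⟪w j, ∑ l, w l⟫ := by rw [← sum_inner, real_inner_self_eq_norm_sq]
    _ ≤ ∑ _j : ι, ⟪w i, ∑ l, w l⟫ := sum_le_sum fun j _ => hi j (mem_univ j)
    _ = Fintype.card ι * ⟪w i, ∑ l, w l⟫ := by rw [sum_const, card_univ, nsmul_eq_mul]

theorem norm_smul_sub_le_of_norm_sq_le_mul_inner {E : Type*} [NormedAddCommGroup E]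
    [InnerProductSpace ℝ E] {u s : E} {c : ℝ} (hc : 0 ≤ c) (hu : ‖u‖ = 1)
    (hs : ‖s‖ ^ 2 ≤ c * ⟪u, s⟫) : ‖c • u - s‖ ≤ c := by
  have hsq : ‖c • u - s‖ ^ 2 = c ^ 2 - 2 * (c * ⟪u, s⟫) + ‖s‖ ^ 2 := by
    rw [norm_sub_sq_real, real_inner_smul_left, norm_smul, hu, Real.norm_of_nonneg hc]
    ring
  refine le_of_pow_le_pow_left₀ two_ne_zero hc ?_
  rw [hsq]
  nlinarith

section SampleMargin

variable {ι E : Type*} [Fintype ι] [DecidableEq ι]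
  [NormedAddCommGroup E] [InnerProductSpace ℝ E]

noncomputable def sampleMargin (w : ι → E) (i : ι) (hi : (univ.erase i).Nonempty) (z : E) : ℝ :=
  ⟪w i, z⟫ - (univ.erase i).sup' hi fun j => ⟪w j, z⟫

theorem sampleMargin_self_of_inner_eq {w : ι → E} {i : ι} (hi : (univ.erase i).Nonempty)
    (hwi : ‖w i‖ = 1) {c : ℝ} (hc : ∀ j, j ≠ i → ⟪w j, w i⟫ = c) :
    sampleMargin w i hi (w i) = 1 - c := by
  have hsup : ((univ.erase i).sup' hi fun j => ⟪w j, w i⟫) = c := by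
    rw [sup'_congr hi rfl fun j hj => hc j (ne_of_mem_erase hj)]
    exact sup'_const _ _
  rw [sampleMargin, hsup, real_inner_self_eq_norm_sq, hwi, one_pow]

theorem one_lt_card_of_erase_nonempty {i : ι} (hi : (univ.erase i).Nonempty) :
    1 < Fintype.card ι := by
  have h := hi.card_pos
  rw [card_erase_of_mem (mem_univ i), card_univ] at h
  omega

theorem card_sub_one_mul_sampleMargin_le (w : ι → E) (i : ι) (hi : (univ.erase i).Nonempty)
    (z : E) :
    ((Fintype.card ι : ℝ) - 1) * sampleMargin w i hi z ≤
      ⟪(Fintype.card ι : ℝ) • w i - ∑ j, w j, z⟫ := by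
  set M := (univ.erase i).sup' hi fun j => ⟪w j, z⟫
  have hcard : (((univ.erase i).card : ℕ) : ℝ) = (Fintype.card ι : ℝ) - 1 := by
    rw [card_erase_of_mem (mem_univ i), card_univ,
      Nat.cast_sub (one_lt_card_of_erase_nonempty hi).le, Nat.cast_one]
  have hmax : ∑ j ∈ univ.erase i, ⟪w j, z⟫ ≤ ((Fintype.card ι : ℝ) - 1) * M := by
    rw [← hcard, ← nsmul_eq_mul]
    exact sum_le_card_nsmul _ _ _ fun j hj => le_sup' (fun j => ⟪w j, z⟫) hj
  have hrest : ∑ j ∈ univ.erase i, ⟪w j, z⟫ = ⟪∑ j, w j, z⟫ - ⟪w i, z⟫ := by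
    rw [sum_erase_eq_sub (mem_univ i), sum_inner]
  rw [sampleMargin, inner_sub_left, real_inner_smul_left]
  linarith

theorem exists_forall_sampleMargin_le [Nonempty ι] {w : ι → E} (hw : ∀ i, ‖w i‖ = 1) :
    ∃ i, ∀ (hi : (univ.erase i).Nonempty) (z : E), ‖z‖ = 1 →
      sampleMargin w i hi z ≤ (Fintype.card ι : ℝ) / ((Fintype.card ι : ℝ) - 1) := by
  obtain ⟨i, hi⟩ := exists_norm_sq_sum_le_card_mul_inner w
  have hnorm := norm_smul_sub_le_of_norm_sq_le_mul_inner (Nat.cast_nonneg _) (hw i) hi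
  refine ⟨i, fun hne z hz => ?_⟩
  have hpos : (0 : ℝ) < (Fintype.card ι : ℝ) - 1 :=
    sub_pos.mpr (by exact_mod_cast one_lt_card_of_erase_nonempty hne)
  rw [le_div_iff₀ hpos, mul_comm]
  calc ((Fintype.card ι : ℝ) - 1) * sampleMargin w i hne z
      ≤ ⟪(Fintype.card ι : ℝ) • w i - ∑ j, w j, z⟫ := card_sub_one_mul_sampleMargin_le w i hne z
    _ ≤ ‖(Fintype.card ι : ℝ) • w i - ∑ j, w j‖ * ‖z‖ := real_inner_le_norm _ _
    _ ≤ Fintype.card ι := by rw [hz, mul_one]; exact hnorm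

end SampleMargin

theorem stmt6_general {d k : ℕ} (hk : 2 ≤ k)
    (w : Fin k → EuclideanSpace ℝ (Fin d))
    (hw : ∀ i, ‖w i‖ = 1)
    (hsimplex : ∀ i j, i ≠ j → ⟪w i, w j⟫ = -1 / ((k : ℝ) - 1))
    (hU : (Finset.univ : Finset (Fin k)).Nonempty)
    (hne : ∀ i : Fin k, (Finset.univ.erase i).Nonempty) :
    (∀ i : Fin k,
      ⟪w i, w i⟫ - (Finset.univ.erase i).sup' (hne i) (fun j => ⟪w j, w i⟫)
        = (k : ℝ) / ((k : ℝ) - 1)) ∧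
    (∀ w' : Fin k → EuclideanSpace ℝ (Fin d), (∀ i, ‖w' i‖ = 1) →
      (Finset.univ.inf' hU fun i =>
        sSup {m : ℝ | ∃ z : EuclideanSpace ℝ (Fin d), ‖z‖ = 1 ∧
          m = ⟪w' i, z⟫ - (Finset.univ.erase i).sup' (hne i) (fun j => ⟪w' j, z⟫)})
        ≤ (k : ℝ) / ((k : ℝ) - 1)) := by
  have hk1 : (0 : ℝ) < k - 1 := by
    have : (2 : ℝ) ≤ k := by exact_mod_cast hk
    linarith
  refine ⟨fun i => ?_, fun w' hw' => ?_⟩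
  · change sampleMargin w i (hne i) (w i) = _
    rw [sampleMargin_self_of_inner_eq (hne i) (hw i) fun j hj => hsimplex j i hj]
    field_simp [hk1.ne']
    ring
  · have : Nonempty (Fin k) := univ_nonempty_iff.mp hU
    obtain ⟨i, hi⟩ := exists_forall_sampleMargin_le hw'
    refine (inf'_le _ (mem_univ i)).trans (Real.sSup_le ?_ (div_nonneg k.cast_nonneg hk1.le))
    rintro m ⟨z, hz, rfl⟩
    have hmargin := hi (hne i) z hz
    rw [Fintype.card_fin] at hmargin
    exact hmargin

theorem stmt6 {d k : ℕ} (hd : 2 ≤ d) (hk : 2 ≤ k) (hkd : k ≤ d + 1)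
    (w : Fin k → EuclideanSpace ℝ (Fin d))
    (hw : ∀ i, ‖w i‖ = 1)
    (hsimplex : ∀ i j, i ≠ j → ⟪w i, w j⟫ = -1 / ((k : ℝ) - 1))
    (hU : (Finset.univ : Finset (Fin k)).Nonempty)
    (hne : ∀ i : Fin k, (Finset.univ.erase i).Nonempty) :
    (∀ i : Fin k,
      ⟪w i, w i⟫ - (Finset.univ.erase i).sup' (hne i) (fun j => ⟪w j, w i⟫)
        = (k : ℝ) / ((k : ℝ) - 1)) ∧
    (∀ w' : Fin k → EuclideanSpace ℝ (Fin d), (∀ i, ‖w' i‖ = 1) →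
      (Finset.univ.inf' hU fun i =>
        sSup {m : ℝ | ∃ z : EuclideanSpace ℝ (Fin d), ‖z‖ = 1 ∧
          m = ⟪w' i, z⟫ - (Finset.univ.erase i).sup' (hne i) (fun j => ⟪w' j, z⟫)})
        ≤ (k : ℝ) / ((k : ℝ) - 1)) :=
  stmt6_general hk w hw hsimplex hU hne
end

section
/- Let w₁,...,w_k, z₁,...,z_N be unit vectors in ℝ^d, class-balanced (each class j ∈ {1,...,k} has exactly N/k samples), 2 ≤ k ≤ d+1, d ≥ 2. Then the empirical sample-margin risk (1/N)∑_{i=1}^N (−⟪w_{y_i}, z_i⟫ + max_{j≠y_i} ⟪w_j, z_i⟫) ≥ −k/(k−1), with equality iff ⟪w_i, w_j⟫ = −1/(k−1) for all i ≠ j and z_i = w_{y_i} for all i. -/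
open scoped RealInnerProductSpace BigOperators

/-!
Write `S = ∑ j, w j` and `k` for the number of classes. Bounding the maximum over the other
`k - 1` classes by their average gives `(k - 1) · loss(c, z) ≥ ⟪S - k • w c, z⟫ ≥ -‖S - k • w c‖`.
Balance turns the average over samples into the average over classes, and Cauchy–Schwarz with
`∑ j, ‖S - k • w j‖² = k³ - k ‖S‖²` bounds `∑ j, ‖S - k • w j‖` by `k²`. At equality `S = 0`,
which leaves `⟪w c, z⟫ = 1`, i.e. `z = w c`, and equality in "maximum ≥ average" then forces
`⟪w j, w c⟫ = (⟪S, w c⟫ - 1) / (k - 1) = -1 / (k - 1)`.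
-/

open Finset

section Balanced

variable {α ι : Type*} [Fintype α] [Fintype ι] [DecidableEq ι]

def IsBalanced (y : α → ι) : Prop :=
  ∀ j, (univ.filter fun i => y i = j).card * Fintype.card ι = Fintype.card α

lemma IsBalanced.card_nsmul_sum_comp {M : Type*} [AddCommMonoid M] {y : α → ι}
    (hbal : IsBalanced y) (F : ι → M) :
    Fintype.card ι • ∑ i, F (y i) = Fintype.card α • ∑ j, F j := by
  rw [← sum_fiberwise univ y, smul_sum, smul_sum]
  refine sum_congr rfl fun j _ => ?_
  rw [sum_congr rfl fun i hi => congrArg F (mem_filter.1 hi).2, sum_const, smul_smul, mul_comm,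
    hbal j]

lemma IsBalanced.surjective [Nonempty α] {y : α → ι} (hbal : IsBalanced y) :
    Function.Surjective y := by
  intro j
  by_contra! hj
  have := hbal j
  rw [filter_false_of_mem fun i _ => hj i, card_empty, zero_mul] at this
  exact Fintype.card_ne_zero this.symm

end Balanced

section Norms

variable {E ι : Type*} [NormedAddCommGroup E] [InnerProductSpace ℝ E] [Fintype ι]

lemma sum_norm_sum_sub_card_smul_sq (w : ι → E) :
    ∑ j, ‖∑ i, w i - (Fintype.card ι : ℝ) • w j‖ ^ 2 =
      (Fintype.card ι : ℝ) ^ 2 * ∑ j, ‖w j‖ ^ 2 - Fintype.card ι * ‖∑ i, w i‖ ^ 2 := by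
  simp only [norm_sub_sq_real, norm_smul, real_inner_smul_right, sum_add_distrib,
    sum_sub_distrib, ← mul_sum, ← inner_sum, real_inner_self_eq_norm_sq, sum_const, card_univ,
    nsmul_eq_mul, Real.norm_natCast, mul_pow]
  ring

lemma sq_sum_norm_sum_sub_card_smul_le (w : ι → E) (hw : ∀ j, ‖w j‖ = 1) :
    (∑ j, ‖∑ i, w i - (Fintype.card ι : ℝ) • w j‖) ^ 2 ≤
      (Fintype.card ι : ℝ) ^ 4 - (Fintype.card ι : ℝ) ^ 2 * ‖∑ i, w i‖ ^ 2 :=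
  calc (∑ j, ‖∑ i, w i - (Fintype.card ι : ℝ) • w j‖) ^ 2
      ≤ Fintype.card ι * ∑ j, ‖∑ i, w i - (Fintype.card ι : ℝ) • w j‖ ^ 2 := by
        simpa using sq_sum_le_card_mul_sum_sq (s := univ)
          (f := fun j => ‖∑ i, w i - (Fintype.card ι : ℝ) • w j‖)
    _ = _ := by
        rw [sum_norm_sum_sub_card_smul_sq]
        simp only [hw, one_pow, sum_const, card_univ, nsmul_eq_mul, mul_one]
        ring

lemma sum_norm_sum_sub_card_smul_le (w : ι → E) (hw : ∀ j, ‖w j‖ = 1) :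
    ∑ j, ‖∑ i, w i - (Fintype.card ι : ℝ) • w j‖ ≤ (Fintype.card ι : ℝ) ^ 2 :=
  abs_le_of_sq_le_sq' (by nlinarith [sq_sum_norm_sum_sub_card_smul_le w hw, sq_nonneg ‖∑ i, w i‖])
    (by positivity) |>.2

lemma sum_eq_zero_of_card_sq_le_sum_norm (w : ι → E) (hw : ∀ j, ‖w j‖ = 1)
    (h : (Fintype.card ι : ℝ) ^ 2 ≤ ∑ j, ‖∑ i, w i - (Fintype.card ι : ℝ) • w j‖) :
    ∑ j, w j = 0 := by
  rcases isEmpty_or_nonempty ι with hι | hι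
  · exact Fintype.sum_empty w
  have hk : (0 : ℝ) < Fintype.card ι ^ 2 := by positivity
  have hS : ‖∑ j, w j‖ ^ 2 ≤ 0 := by
    nlinarith [sq_sum_norm_sum_sub_card_smul_le w hw, pow_le_pow_left₀ hk.le h 2, mul_pos hk hk]
  exact norm_eq_zero.1 (pow_eq_zero_iff two_ne_zero |>.1 (le_antisymm hS (sq_nonneg _)))

end Norms

section MarginLoss

variable {E ι α : Type*} [NormedAddCommGroup E] [InnerProductSpace ℝ E] [Fintype ι]
  [DecidableEq ι] [Fintype α]

def marginLoss (w : ι → E) (c : ι) (z : E) (h : (univ.erase c).Nonempty) : ℝ :=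
  -⟪w c, z⟫ + (univ.erase c).sup' h fun j => ⟪w j, z⟫

noncomputable def marginRisk (w : ι → E) (z : α → E) (y : α → ι)
    (hne : ∀ c : ι, (univ.erase c).Nonempty) : ℝ :=
  1 / (Fintype.card α : ℝ) * ∑ i, marginLoss w (y i) (z i) (hne (y i))

lemma cast_card_erase_univ (c : ι) :
    ((univ.erase c).card : ℝ) = Fintype.card ι - 1 := by
  rw [card_erase_of_mem (mem_univ c), card_univ, Nat.cast_pred (Fintype.card_pos_iff.2 ⟨c⟩)]

/-- The maximum over the `k - 1` other classes dominates their average. -/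
lemma inner_sum_sub_card_smul_le_marginLoss (w : ι → E) (c : ι) (z : E)
    (h : (univ.erase c).Nonempty) :
    ⟪∑ j, w j - (Fintype.card ι : ℝ) • w c, z⟫ ≤ (Fintype.card ι - 1) * marginLoss w c z h := by
  have hmax : ∑ j ∈ univ.erase c, ⟪w j, z⟫ ≤ (univ.erase c).card • (univ.erase c).sup' h
      fun j => ⟪w j, z⟫ :=
    sum_le_card_nsmul _ _ _ fun j hj => le_sup' (fun j => ⟪w j, z⟫) hj
  rw [sum_erase_eq_sub (mem_univ c), ← sum_inner, nsmul_eq_mul, cast_card_erase_univ] at hmax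
  rw [inner_sub_left, real_inner_smul_left, marginLoss]
  linarith

lemma neg_norm_sum_sub_card_smul_le_marginLoss (w : ι → E) (c : ι) {z : E} (hz : ‖z‖ ≤ 1)
    (h : (univ.erase c).Nonempty) :
    -‖∑ j, w j - (Fintype.card ι : ℝ) • w c‖ ≤ (Fintype.card ι - 1) * marginLoss w c z h := by
  set v := ∑ j, w j - (Fintype.card ι : ℝ) • w c
  calc -‖v‖ ≤ -(‖v‖ * ‖z‖) := neg_le_neg (mul_le_of_le_one_right (norm_nonneg v) hz)
    _ ≤ ⟪v, z⟫ := neg_le_of_abs_le (abs_real_inner_le_norm v z)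
    _ ≤ _ := inner_sum_sub_card_smul_le_marginLoss w c z h

lemma eq_and_inner_eq_of_marginLoss_eq {w : ι → E} {c : ι} {z : E}
    {h : (univ.erase c).Nonempty} (hS : ∑ j, w j = 0) (hw : ∀ j, ‖w j‖ = 1) (hz : ‖z‖ = 1)
    (h_eq : (Fintype.card ι - 1) * marginLoss w c z h = -Fintype.card ι) :
    z = w c ∧ ∀ j ≠ c, ⟪w j, w c⟫ = -1 / (Fintype.card ι - 1) := by
  have hk : (1 : ℝ) ≤ Fintype.card ι - 1 :=
    cast_card_erase_univ (ι := ι) c ▸ Nat.one_le_cast.2 h.card_pos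
  have hwz : 1 ≤ ⟪w c, z⟫ := by
    have := inner_sum_sub_card_smul_le_marginLoss w c z h
    rw [hS, zero_sub, inner_neg_left, real_inner_smul_left, h_eq] at this
    nlinarith
  have hzc : z = w c := by
    refine ((inner_eq_one_iff_of_norm_eq_one (hw c) hz).1 (le_antisymm ?_ hwz)).symm
    simpa [hw c, hz] using real_inner_le_norm (w c) z
  subst hzc
  refine ⟨rfl, fun j hj => ?_⟩
  have hmax : ((univ.erase c).sup' h fun j => ⟪w j, w c⟫) = -1 / (Fintype.card ι - 1) := by
    rw [marginLoss, real_inner_self_eq_norm_sq, hw c] at h_eq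
    field_simp
    linarith
  have hle : ∀ i ∈ univ.erase c, ⟪w i, w c⟫ ≤ -1 / (Fintype.card ι - 1) :=
    fun i hi => hmax ▸ le_sup' (fun j => ⟪w j, w c⟫) hi
  have hsum : ∑ i ∈ univ.erase c, ⟪w i, w c⟫ =
      ∑ _i ∈ univ.erase c, (-1 / (Fintype.card ι - 1) : ℝ) := by
    rw [sum_erase_eq_sub (mem_univ c), ← sum_inner, hS, inner_zero_left,
      real_inner_self_eq_norm_sq, hw c, sum_const, nsmul_eq_mul, cast_card_erase_univ]
    field_simp
    ring
  exact (sum_eq_sum_iff_of_le hle).1 hsum j (mem_erase.2 ⟨hj, mem_univ j⟩)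

lemma marginLoss_self_of_inner_eq {w : ι → E} {c : ι} {a : ℝ} (h : (univ.erase c).Nonempty)
    (hw : ‖w c‖ = 1) (ha : ∀ j ≠ c, ⟪w j, w c⟫ = a) :
    marginLoss w c (w c) h = -1 + a := by
  rw [marginLoss, real_inner_self_eq_norm_sq, hw, one_pow,
    sup'_congr h rfl fun j hj => ha j (ne_of_mem_erase hj), sup'_const]

variable {w : ι → E} {z : α → E} {y : α → ι} {hne : ∀ c : ι, (univ.erase c).Nonempty}

lemma neg_card_mul_sum_norm_le_sum_marginLoss (hz : ∀ i, ‖z i‖ ≤ 1) (hbal : IsBalanced y) :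
    -(Fintype.card α * ∑ j, ‖∑ i, w i - (Fintype.card ι : ℝ) • w j‖) ≤
      Fintype.card ι * ((Fintype.card ι - 1) * ∑ i, marginLoss w (y i) (z i) (hne (y i))) := by
  have hfib := hbal.card_nsmul_sum_comp fun j => ‖∑ i, w i - (Fintype.card ι : ℝ) • w j‖
  simp only [nsmul_eq_mul] at hfib
  rw [← hfib, ← mul_neg, ← sum_neg_distrib]
  refine mul_le_mul_of_nonneg_left ?_ (Nat.cast_nonneg _)
  rw [mul_sum]
  exact sum_le_sum fun i _ => neg_norm_sum_sub_card_smul_le_marginLoss w (y i) (hz i) (hne (y i))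

theorem neg_div_le_marginRisk [Nonempty α] (hk : 1 < Fintype.card ι) (hw : ∀ j, ‖w j‖ = 1)
    (hz : ∀ i, ‖z i‖ ≤ 1) (hbal : IsBalanced y) :
    -(Fintype.card ι : ℝ) / (Fintype.card ι - 1) ≤ marginRisk w z y hne := by
  have hk1 : (0 : ℝ) < Fintype.card ι - 1 := sub_pos.2 (by exact_mod_cast hk)
  have hN : (0 : ℝ) < Fintype.card α := by exact_mod_cast Fintype.card_pos
  have hlow := neg_card_mul_sum_norm_le_sum_marginLoss (w := w) (hne := hne) hz hbal
  have hsum := sum_norm_sum_sub_card_smul_le w hw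
  rw [marginRisk, one_div, ← div_eq_inv_mul, le_div_iff₀ hN, div_mul_eq_mul_div,
    div_le_iff₀ hk1]
  nlinarith

theorem marginRisk_eq_neg_div_iff [Nonempty α] (hk : 1 < Fintype.card ι) (hw : ∀ j, ‖w j‖ = 1)
    (hz : ∀ i, ‖z i‖ = 1) (hbal : IsBalanced y) :
    marginRisk w z y hne = -(Fintype.card ι : ℝ) / (Fintype.card ι - 1) ↔
      (∀ i j, i ≠ j → ⟪w i, w j⟫ = -1 / (Fintype.card ι - 1)) ∧ ∀ a, z a = w (y a) := by
  have hk1 : (Fintype.card ι : ℝ) - 1 ≠ 0 := sub_ne_zero.2 (by exact_mod_cast hk.ne')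
  have hN : (0 : ℝ) < Fintype.card α := by exact_mod_cast Fintype.card_pos
  constructor
  · intro hR
    have hsum : (Fintype.card ι - 1) * ∑ a, marginLoss w (y a) (z a) (hne (y a)) =
        Fintype.card α * -(Fintype.card ι : ℝ) := by
      rw [marginRisk, one_div, inv_mul_eq_iff_eq_mul₀ hN.ne'] at hR
      rw [hR]
      field_simp
    have hS : ∑ j, w j = 0 := by
      refine sum_eq_zero_of_card_sq_le_sum_norm w hw (le_of_mul_le_mul_left ?_ hN)
      have hlow := neg_card_mul_sum_norm_le_sum_marginLoss (w := w) (hne := hne)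
        (fun a => (hz a).le) hbal
      rw [hsum] at hlow
      linarith
    have hS_norm : ∀ c, ‖∑ j, w j - (Fintype.card ι : ℝ) • w c‖ = Fintype.card ι := by
      intro c
      rw [hS, zero_sub, norm_neg, norm_smul, hw c, mul_one, Real.norm_natCast]
    have hlow a : -(Fintype.card ι : ℝ) ≤
        (Fintype.card ι - 1) * marginLoss w (y a) (z a) (hne (y a)) := by
      simpa only [hS_norm] using
        neg_norm_sum_sub_card_smul_le_marginLoss w (y a) (hz a).le (hne (y a))
    have heach := (sum_eq_sum_iff_of_le fun a _ => hlow a).1 (by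
      rw [← mul_sum, hsum, sum_const, card_univ, nsmul_eq_mul])
    have hloss a := eq_and_inner_eq_of_marginLoss_eq hS hw (hz a) (heach a (mem_univ a)).symm
    refine ⟨fun i j hij => ?_, fun a => (hloss a).1⟩
    obtain ⟨a, rfl⟩ := hbal.surjective j
    exact (hloss a).2 i hij
  · rintro ⟨hpair, hzw⟩
    have hloss a : marginLoss w (y a) (z a) (hne (y a)) = -1 + -1 / (Fintype.card ι - 1) := by
      rw [hzw a]
      exact marginLoss_self_of_inner_eq _ (hw _) fun j hj => hpair j (y a) hj
    rw [marginRisk, sum_congr rfl fun a _ => hloss a, sum_const, card_univ, nsmul_eq_mul]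
    field_simp
    ring

end MarginLoss

theorem stmt19_general {d k N : ℕ} (hk : 2 ≤ k)
    (hN : 1 ≤ N)
    (w : Fin k → EuclideanSpace ℝ (Fin d))
    (z : Fin N → EuclideanSpace ℝ (Fin d))
    (y : Fin N → Fin k)
    (hw : ∀ j, ‖w j‖ = 1) (hz : ∀ i, ‖z i‖ = 1)
    (hbal : ∀ j : Fin k, ((Finset.univ : Finset (Fin N)).filter
        (fun i => y i = j)).card * k = N)
    (hne : ∀ j : Fin k, (Finset.univ.erase j).Nonempty) :
    ((1 / (N : ℝ)) * ∑ i, (-⟪w (y i), z i⟫ +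
        (Finset.univ.erase (y i)).sup' (hne (y i)) (fun j => ⟪w j, z i⟫))
      ≥ -(k : ℝ) / ((k : ℝ) - 1)) ∧
    ((1 / (N : ℝ)) * ∑ i, (-⟪w (y i), z i⟫ +
        (Finset.univ.erase (y i)).sup' (hne (y i)) (fun j => ⟪w j, z i⟫))
      = -(k : ℝ) / ((k : ℝ) - 1) ↔
      ((∀ i j : Fin k, i ≠ j → ⟪w i, w j⟫ = -1 / ((k : ℝ) - 1)) ∧
        ∀ i : Fin N, z i = w (y i))) := by
  have : Nonempty (Fin N) := ⟨⟨0, hN⟩⟩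
  have hk' : 1 < Fintype.card (Fin k) := by rwa [Fintype.card_fin]
  have hbal' : IsBalanced y := by simpa only [IsBalanced, Fintype.card_fin] using hbal
  have hge := neg_div_le_marginRisk (hne := hne) hk' hw (fun i => (hz i).le) hbal'
  have heq := marginRisk_eq_neg_div_iff (hne := hne) hk' hw hz hbal'
  simp only [marginRisk, Fintype.card_fin] at hge heq
  exact ⟨hge, heq⟩

theorem stmt19 {d k N : ℕ} (hd : 2 ≤ d) (hk : 2 ≤ k) (hkd : k ≤ d + 1)
    (hN : 1 ≤ N)
    (w : Fin k → EuclideanSpace ℝ (Fin d))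
    (z : Fin N → EuclideanSpace ℝ (Fin d))
    (y : Fin N → Fin k)
    (hw : ∀ j, ‖w j‖ = 1) (hz : ∀ i, ‖z i‖ = 1)
    (hbal : ∀ j : Fin k, ((Finset.univ : Finset (Fin N)).filter
        (fun i => y i = j)).card * k = N)
    (hne : ∀ j : Fin k, (Finset.univ.erase j).Nonempty) :
    ((1 / (N : ℝ)) * ∑ i, (-⟪w (y i), z i⟫ +
        (Finset.univ.erase (y i)).sup' (hne (y i)) (fun j => ⟪w j, z i⟫))
      ≥ -(k : ℝ) / ((k : ℝ) - 1)) ∧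
    ((1 / (N : ℝ)) * ∑ i, (-⟪w (y i), z i⟫ +
        (Finset.univ.erase (y i)).sup' (hne (y i)) (fun j => ⟪w j, z i⟫))
      = -(k : ℝ) / ((k : ℝ) - 1) ↔
      ((∀ i j : Fin k, i ≠ j → ⟪w i, w j⟫ = -1 / ((k : ℝ) - 1)) ∧
        ∀ i : Fin N, z i = w (y i))) :=
  stmt19_general hk hN w z y hw hz hbal hne
end
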